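/- For every θ ∈ (0, π/2) there exists δ_θ > 0 such that for all complex z with |z| ≤ 1 and |arg z| ≥ θ, |κ₁(z)| ≤ 1 − δ_θ. -/

import Mathlib

open Real Complex

/-- Maclaurin coefficients of the degree-1 arc-cosine kernel κ₁. -/
noncomputable def k1Coeff : ℕ → ℝ := fun m =>
  if m = 0 then 1 / Real.pi
  else if m = 1 then 1 / 2
  else if m % 2 = 0 then
    (Nat.doubleFactorial (m - 3) : ℝ) /
      ((m - 1 : ℝ) * (Nat.factorial (m / 2)) * 2 ^ (m / 2) * Real.pi)
  else 0

/-- κ₁ on the closed unit disk, defined by its Maclaurin series. -/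
noncomputable def k1Series (z : ℂ) : ℂ := ∑' n : ℕ, (k1Coeff n : ℂ) * z ^ n

/-!
The Maclaurin coefficients of `κ₁` are nonnegative and sum to at most `1`. Indeed, integrating the
binomial series of `(1 - t²)^(-1/2)` twice gives, for `0 ≤ x < 1`,
`κ₁(x) = 1/π + x/2 + (x arcsin x + √(1 - x²) - 1)/π ≤ 1`, and letting `x → 1` bounds every
partial sum of the coefficients. Hence on the closed disk
`|κ₁(z)| ≤ |1/π + z/2| + (1 - 1/π - 1/2)`, and the linear head is shorter than `1/π + 1/2` by a
fixed amount as soon as `Re z ≤ cos θ < 1`.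
-/

open Set MeasureTheory Finset
open scoped Nat

theorem Ring.multichoose_succ_eq_mul_div {K : Type*} [Field K] [CharZero K] (r : K) (n : ℕ) :
    Ring.multichoose r (n + 1) = Ring.multichoose r n * ((r + n) / (n + 1)) := by
  have h := Ring.factorial_nsmul_multichoose_eq_ascPochhammer r (n + 1)
  rw [Polynomial.ascPochhammer_smeval_eq_eval, ascPochhammer_succ_eval,
    ← Polynomial.ascPochhammer_smeval_eq_eval, ← Ring.factorial_nsmul_multichoose_eq_ascPochhammer,
    nsmul_eq_mul, nsmul_eq_mul, Nat.factorial_succ] at h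
  rw [mul_div_assoc', eq_div_iff (Nat.cast_add_one_ne_zero n)]
  apply mul_left_cancel₀ (Nat.cast_ne_zero.mpr (Nat.factorial_ne_zero n) : (n ! : K) ≠ 0)
  push_cast at h
  linear_combination h

theorem multichoose_half_eq (n : ℕ) :
    Ring.multichoose (1 / 2 : ℝ) n = (2 * n - 1)‼ / (2 ^ n * n !) := by
  induction n with
  | zero => simp
  | succ n ih =>
    rw [Ring.multichoose_succ_eq_mul_div, ih, show 2 * (n + 1) - 1 = 2 * n + 1 by omega,
      Nat.doubleFactorial_add_one, Nat.factorial_succ]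
    push_cast
    field_simp
    ring

theorem multichoose_half_nonneg (n : ℕ) : 0 ≤ Ring.multichoose (1 / 2 : ℝ) n := by
  rw [multichoose_half_eq]
  positivity

theorem hasSum_multichoose_half_mul_pow {x : ℝ} (hx : |x| < 1) :
    HasSum (fun n ↦ Ring.multichoose (1 / 2 : ℝ) n * x ^ n) (√(1 - x))⁻¹ := by
  have hx' : x ∈ Metric.eball (0 : ℝ) 1 := by
    simpa [Metric.mem_eball, edist_zero_right, enorm_eq_nnnorm, ← NNReal.coe_lt_one] using hx
  have h := (Real.one_div_one_sub_rpow_hasFPowerSeriesOnBall_zero (1 / 2)).hasSum hx'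
  simp only [FormalMultilinearSeries.ofScalars_apply_eq, smul_eq_mul, zero_add] at h
  simp_rw [← Ring.multichoose_eq] at h
  rwa [Real.sqrt_eq_rpow, ← one_div]

theorem integral_sub_mul_pow (x : ℝ) (n : ℕ) :
    ∫ t in (0 : ℝ)..x, (x - t) * t ^ n = x ^ (n + 2) / ((n + 1) * (n + 2)) := by
  simp_rw [sub_mul]
  rw [intervalIntegral.integral_sub (by apply Continuous.intervalIntegrable; fun_prop)
    (by apply Continuous.intervalIntegrable; fun_prop), intervalIntegral.integral_const_mul]
  simp_rw [← pow_succ']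
  rw [integral_pow, integral_pow]
  field_simp
  push_cast
  ring

theorem sq_lt_one_of_mem_uIcc {x t : ℝ} (hx₀ : 0 ≤ x) (hx₁ : x < 1) (ht : t ∈ uIcc 0 x) :
    t ^ 2 < 1 := by
  rw [uIcc_of_le hx₀] at ht
  nlinarith [ht.1, ht.2]

theorem intervalIntegrable_sub_div_sqrt_one_sub_sq {x : ℝ} (hx₀ : 0 ≤ x) (hx₁ : x < 1) :
    IntervalIntegrable (fun t ↦ (x - t) / √(1 - t ^ 2)) volume 0 x :=
  ContinuousOn.intervalIntegrable <| ContinuousOn.div (by fun_prop) (by fun_prop) fun t ht ↦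
    (Real.sqrt_pos.mpr (sub_pos.mpr (sq_lt_one_of_mem_uIcc hx₀ hx₁ ht))).ne'

theorem integral_sub_div_sqrt_one_sub_sq {x : ℝ} (hx₀ : 0 ≤ x) (hx₁ : x < 1) :
    ∫ t in (0 : ℝ)..x, (x - t) / √(1 - t ^ 2) = x * arcsin x + √(1 - x ^ 2) - 1 := by
  have hderiv : ∀ t ∈ uIcc 0 x,
      HasDerivAt (fun u ↦ x * arcsin u + √(1 - u ^ 2)) ((x - t) / √(1 - t ^ 2)) t := by
    intro t ht
    have ht₁ := sq_lt_one_of_mem_uIcc hx₀ hx₁ ht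
    have harcsin := (Real.hasDerivAt_arcsin (x := t) (by nlinarith) (by nlinarith)).const_mul x
    have hsqrt := ((hasDerivAt_pow 2 t).const_sub 1).sqrt (sub_pos.mpr ht₁).ne'
    refine (harcsin.add hsqrt).congr_deriv ?_
    have := Real.sqrt_pos.mpr (sub_pos.mpr ht₁)
    field_simp
    ring
  rw [intervalIntegral.integral_eq_sub_of_hasDerivAt hderiv
    (intervalIntegrable_sub_div_sqrt_one_sub_sq hx₀ hx₁)]
  simp

theorem hasSum_multichoose_half_mul_pow_div {x : ℝ} (hx₀ : 0 ≤ x) (hx₁ : x < 1) :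
    HasSum (fun n ↦ Ring.multichoose (1 / 2 : ℝ) n * (x ^ (2 * n + 2) / ((2 * n + 1) * (2 * n + 2))))
      (x * arcsin x + √(1 - x ^ 2) - 1) := by
  set F : ℕ → ℝ → ℝ := fun n t ↦ Ring.multichoose (1 / 2 : ℝ) n * ((x - t) * t ^ (2 * n))
  have hF : ∀ t ∈ uIcc 0 x, HasSum (fun n ↦ F n t) ((x - t) / √(1 - t ^ 2)) := by
    intro t ht
    have ht₂ : |t ^ 2| < 1 := by
      rw [abs_of_nonneg (sq_nonneg t)]; exact sq_lt_one_of_mem_uIcc hx₀ hx₁ ht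
    have h := (hasSum_multichoose_half_mul_pow ht₂).mul_left (x - t)
    rw [← div_eq_mul_inv] at h
    refine h.congr_fun fun n ↦ ?_
    simp only [F, ← pow_mul]
    ring
  have hF_nonneg : ∀ n, ∀ t ∈ uIcc 0 x, 0 ≤ F n t := by
    intro n t ht
    rw [uIcc_of_le hx₀] at ht
    exact mul_nonneg (multichoose_half_nonneg n)
      (mul_nonneg (by linarith [ht.2]) (pow_nonneg ht.1 _))
  have hsum_eq : EqOn (fun t ↦ ∑' n, F n t) (fun t ↦ (x - t) / √(1 - t ^ 2)) (uIcc 0 x) :=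
    fun t ht ↦ (hF t ht).tsum_eq
  have h := intervalIntegral.hasSum_integral_of_dominated_convergence F
    (fun n ↦ (by fun_prop : Continuous (F n)).aestronglyMeasurable)
    (fun n ↦ ae_of_all _ fun t ht ↦
      (Real.norm_of_nonneg (hF_nonneg n t (uIoc_subset_uIcc ht))).le)
    (ae_of_all _ fun t ht ↦ (hF t (uIoc_subset_uIcc ht)).summable)
    ((intervalIntegrable_congr (hsum_eq.mono uIoc_subset_uIcc)).mpr
      (intervalIntegrable_sub_div_sqrt_one_sub_sq hx₀ hx₁))
    (ae_of_all _ fun t ht ↦ hF t (uIoc_subset_uIcc ht))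
  rw [integral_sub_div_sqrt_one_sub_sq hx₀ hx₁] at h
  refine h.congr_fun fun n ↦ ?_
  rw [intervalIntegral.integral_const_mul, integral_sub_mul_pow]
  push_cast
  ring

theorem k1Coeff_zero : k1Coeff 0 = 1 / π := by simp [k1Coeff]

theorem k1Coeff_one : k1Coeff 1 = 1 / 2 := by simp [k1Coeff]

theorem k1Coeff_two_mul_add_two (n : ℕ) :
    k1Coeff (2 * n + 2) = Ring.multichoose (1 / 2 : ℝ) n / ((2 * n + 1) * (2 * n + 2) * π) := by
  have hm : (2 * n + 2) / 2 = n + 1 := by omega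
  simp only [k1Coeff, multichoose_half_eq, hm, show 2 * n + 2 - 3 = 2 * n - 1 by omega,
    show (2 * n + 2) % 2 = 0 by omega, if_neg (by omega : 2 * n + 2 ≠ 0),
    if_neg (by omega : 2 * n + 2 ≠ 1), if_true, Nat.factorial_succ]
  push_cast
  rw [show (2 * n + 2 - 1 : ℝ) = 2 * n + 1 by ring]
  field_simp
  ring

theorem k1Coeff_two_mul_add_three (n : ℕ) : k1Coeff (2 * n + 3) = 0 := by
  simp [k1Coeff, Nat.add_mod]

theorem k1Coeff_nonneg (m : ℕ) : 0 ≤ k1Coeff m := by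
  unfold k1Coeff
  split_ifs with h₀
  · positivity
  · positivity
  · have : (1 : ℝ) ≤ m := by exact_mod_cast Nat.one_le_iff_ne_zero.mpr h₀
    have : (0 : ℝ) ≤ m - 1 := by linarith
    positivity
  · rfl

theorem hasSum_k1Coeff_mul_pow {x : ℝ} (hx₀ : 0 ≤ x) (hx₁ : x < 1) :
    HasSum (fun n ↦ k1Coeff n * x ^ n) (1 / π + (x * arcsin x + √(1 - x ^ 2) - 1) / π + x / 2) := by
  refine HasSum.even_add_odd ?_ ?_
  · refine (hasSum_nat_add_iff' 1).mp ?_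
    simp only [Finset.sum_range_one, mul_zero, k1Coeff_zero, pow_zero, mul_one, add_sub_cancel_left]
    refine ((hasSum_multichoose_half_mul_pow_div hx₀ hx₁).div_const π).congr_fun fun n ↦ ?_
    rw [mul_add_one, k1Coeff_two_mul_add_two]
    field_simp
  · convert hasSum_single (f := fun n ↦ k1Coeff (2 * n + 1) * x ^ (2 * n + 1)) 0 fun n hn ↦ ?_
    · simp [k1Coeff_one, div_eq_inv_mul]
    · obtain ⟨k, rfl⟩ := Nat.exists_eq_succ_of_ne_zero hn
      simp [k1Coeff_two_mul_add_three, mul_add_one]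

theorem mul_arcsin_add_sqrt_le {x : ℝ} (hx₀ : 0 ≤ x) (hx₁ : x ≤ 1) :
    x * arcsin x + √(1 - x ^ 2) ≤ x * (π / 2) + (1 - x) := by
  have hsqrt_le_arccos : √(1 - x ^ 2) ≤ arccos x := by
    simpa only [Real.sin_arccos] using Real.sin_le (Real.arccos_nonneg x)
  have hsqrt_le_one : √(1 - x ^ 2) ≤ 1 := Real.sqrt_le_one.mpr (by nlinarith)
  rw [Real.arcsin_eq_pi_div_two_sub_arccos]
  nlinarith [mul_le_mul_of_nonneg_left hsqrt_le_arccos hx₀]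

theorem sum_range_le_of_forall_sum_range_mul_pow_le {a : ℕ → ℝ} {C : ℝ} (N : ℕ)
    (h : ∀ x ∈ Ico (0 : ℝ) 1, ∑ n ∈ range N, a n * x ^ n ≤ C) :
    ∑ n ∈ range N, a n ≤ C := by
  have hlim : Filter.Tendsto (fun x : ℝ ↦ ∑ n ∈ range N, a n * x ^ n) (nhdsWithin 1 (Iio 1))
      (nhds (∑ n ∈ range N, a n)) := by
    have h := ((by fun_prop : Continuous fun x : ℝ ↦ ∑ n ∈ range N, a n * x ^ n).tendsto 1)
    simp only [one_pow, mul_one] at h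
    exact h.mono_left nhdsWithin_le_nhds
  refine le_of_tendsto hlim ?_
  filter_upwards [Ioo_mem_nhdsLT (zero_lt_one' ℝ)] with x hx
  exact h x ⟨hx.1.le, hx.2⟩

theorem sum_range_k1Coeff_le_one (N : ℕ) : ∑ n ∈ range N, k1Coeff n ≤ 1 := by
  refine sum_range_le_of_forall_sum_range_mul_pow_le N fun x hx ↦ ?_
  calc ∑ n ∈ range N, k1Coeff n * x ^ n
      ≤ 1 / π + (x * arcsin x + √(1 - x ^ 2) - 1) / π + x / 2 :=
        sum_le_hasSum _ (fun n _ ↦ mul_nonneg (k1Coeff_nonneg n) (pow_nonneg hx.1 n))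
          (hasSum_k1Coeff_mul_pow hx.1 hx.2)
    _ ≤ 1 := by
        have h := mul_arcsin_add_sqrt_le hx.1 hx.2.le
        rw [← sub_nonneg]
        have : 0 < π := pi_pos
        field_simp
        nlinarith [mul_nonneg (sub_nonneg.mpr hx.2.le) (by linarith [pi_gt_three] : 0 ≤ π - 1)]

theorem summable_k1Coeff : Summable k1Coeff :=
  summable_of_sum_range_le k1Coeff_nonneg sum_range_k1Coeff_le_one

theorem tsum_k1Coeff_le_one : ∑' n, k1Coeff n ≤ 1 :=
  tsum_le_of_sum_range_le k1Coeff_nonneg sum_range_k1Coeff_le_one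

theorem norm_tsum_mul_pow_le {a : ℕ → ℝ} (ha : ∀ n, 0 ≤ a n) (hs : Summable a) {z : ℂ}
    (hz : ‖z‖ ≤ 1) :
    ‖∑' n, (a n : ℂ) * z ^ n‖ ≤ ‖(a 0 : ℂ) + a 1 * z‖ + (∑' n, a n - a 0 - a 1) := by
  have hbound : ∀ n, ‖(a n : ℂ) * z ^ n‖ ≤ a n := fun n ↦ by
    rw [norm_mul, norm_pow, Complex.norm_real, Real.norm_of_nonneg (ha n)]
    exact mul_le_of_le_one_right (ha n) (pow_le_one₀ (norm_nonneg z) hz)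
  have hsz : Summable fun n ↦ (a n : ℂ) * z ^ n := Summable.of_norm_bounded hs hbound
  have htail : ‖∑' n, (a (n + 2) : ℂ) * z ^ (n + 2)‖ ≤ ∑' n, a (n + 2) :=
    tsum_of_norm_bounded ((summable_nat_add_iff 2).mpr hs).hasSum fun n ↦ hbound (n + 2)
  rw [← hsz.sum_add_tsum_nat_add 2, ← hs.sum_add_tsum_nat_add 2]
  simp only [Finset.sum_range_succ, Finset.sum_range_zero, zero_add, pow_zero, pow_one, mul_one]
  linarith [norm_add_le ((a 0 : ℂ) + a 1 * z) (∑' n, (a (n + 2) : ℂ) * z ^ (n + 2))]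

theorem norm_add_mul_le_of_re_le {a b c : ℝ} (ha : 0 < a) (hb : 0 < b) {z : ℂ} (hz : ‖z‖ ≤ 1)
    (hre : z.re ≤ c) :
    ‖(a : ℂ) + b * z‖ ≤ a + b - a * b * (1 - c) / (a + b) := by
  -- `‖a + b z‖² ≤ (a + b)² - 2ab(1 - c) = (a + b)² - 2(a + b)δ ≤ (a + b - δ)²`
  set δ := a * b * (1 - c) / (a + b)
  have hδ : δ * (a + b) = a * b * (1 - c) := div_mul_cancel₀ _ (by positivity)
  have hc : -1 ≤ c := by linarith [(abs_le.mp ((Complex.abs_re_le_norm z).trans hz)).1]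
  have hz2 : z.re ^ 2 + z.im ^ 2 ≤ 1 := by
    have h := Complex.sq_norm z
    rw [Complex.normSq_apply] at h
    nlinarith [norm_nonneg z]
  have hrhs : 0 ≤ a + b - δ := by nlinarith [mul_pos ha hb]
  rw [← pow_le_pow_iff_left₀ (norm_nonneg _) hrhs two_ne_zero, Complex.sq_norm,
    Complex.normSq_apply]
  simp only [Complex.add_re, Complex.add_im, Complex.mul_re, Complex.mul_im, Complex.ofReal_re,
    Complex.ofReal_im, zero_mul, sub_zero, add_zero, zero_add]
  nlinarith [mul_le_mul_of_nonneg_left hre (mul_pos ha hb).le,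
    mul_le_mul_of_nonneg_left hz2 (sq_nonneg b), sq_nonneg δ]

theorem re_le_cos_of_le_abs_arg {z : ℂ} (hz : ‖z‖ ≤ 1) {θ : ℝ} (hθ₀ : 0 ≤ θ) (hθ : θ ≤ π / 2)
    (harg : θ ≤ |arg z|) : z.re ≤ Real.cos θ := by
  have hcos : Real.cos (arg z) ≤ Real.cos θ := by
    rw [← Real.cos_abs]
    exact Real.cos_le_cos_of_nonneg_of_le_pi hθ₀ (Complex.abs_arg_le_pi z) harg
  have hcos_nonneg : 0 ≤ Real.cos θ := Real.cos_nonneg_of_mem_Icc ⟨by linarith [pi_pos], hθ⟩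
  rw [← Complex.norm_mul_cos_arg]
  nlinarith [mul_le_mul_of_nonneg_left hcos (norm_nonneg z)]

theorem k1_bounded_away_from_one (θ : ℝ) (hθ : θ ∈ Set.Ioo 0 (Real.pi / 2)) :
    ∃ δ > 0, ∀ z : ℂ, ‖z‖ ≤ 1 → θ ≤ |Complex.arg z| → ‖k1Series z‖ ≤ 1 - δ := by
  obtain ⟨hθ₀, hθ₁⟩ := hθ
  have ha : 0 < k1Coeff 0 := by rw [k1Coeff_zero]; positivity
  have hb : 0 < k1Coeff 1 := by rw [k1Coeff_one]; positivity
  have hcos : Real.cos θ < 1 := by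
    simpa using Real.cos_lt_cos_of_nonneg_of_le_pi le_rfl (by linarith [pi_pos]) hθ₀
  refine ⟨k1Coeff 0 * k1Coeff 1 * (1 - Real.cos θ) / (k1Coeff 0 + k1Coeff 1),
    by have := sub_pos.mpr hcos; positivity, fun z hz harg ↦ ?_⟩
  calc ‖k1Series z‖
      ≤ ‖(k1Coeff 0 : ℂ) + k1Coeff 1 * z‖ + (∑' n, k1Coeff n - k1Coeff 0 - k1Coeff 1) :=
        norm_tsum_mul_pow_le k1Coeff_nonneg summable_k1Coeff hz
    _ ≤ _ := by
        linarith [tsum_k1Coeff_le_one,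
          norm_add_mul_le_of_re_le ha hb hz (re_le_cos_of_le_abs_arg hz hθ₀.le hθ₁.le harg)]
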